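/- arXiv:1712.08194 — 5 statements merged into one kernel-verified Lean document; each statement's English description precedes it below -/
import Mathlib

section
/- Let Λ be a k-graph and G a group. Set Λ^e := ⋃_{i=1}^{k} Λ^{e_i}. Suppose G acts on the set Λ^0 ∪ Λ^e and there is a restriction map G × (Λ^0 ∪ Λ^e) → G, (g, x) ↦ g|_x, satisfying: (i) G·Λ^n ⊆ Λ^n for all n ∈ {0, e_1, …, e_k}; (ii) s(g·μ) = g·s(μ) and r(g·μ) = g·r(μ) for all g ∈ G, μ ∈ Λ^e; (iii) g|_μ·s(ν) = g·s(ν) for all g ∈ G, μ ∈ Λ^e, ν ∈ Λ with s(μ) = r(ν); (iv) (g·μ)(g|_μ·ν) = (g·α)(g|_α·β) for all g ∈ G and μ, ν, α, β ∈ Λ^e with μν = αβ; (v) g|_v = g for all g ∈ G, v ∈ Λ^0; (vi) (g|_μ)|_ν = (g|_α)|_β for all g ∈ G and μ, ν, α, β ∈ Λ^e with μν = αβ; (vii) (gh)|_μ = (g|_{h·μ})(h|_μ) for all g, h ∈ G, μ ∈ Λ^e. Then there exists a unique self-similar action of G on Λ with restriction map G × Λ → G extending the given action and the given restriction map. -/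
/-!
Extend the action and the restriction by recursion on the degree, peeling off a first edge:
`g·(eν) = (g·e)(g|_e·ν)` and `g|_{eν} = (g|_e)|_ν`. The result does not depend on which first
edge is peeled: if `eν = EV` with edges `e, E` of different colours, unique factorization
completes them to an edge square `ef = Ef'` followed by a common tail, and conditions (iv) and
(vi) say precisely that the expansions along the two sides of this square agree. Granted this,
each axiom of a self-similar action, and uniqueness, follows by induction on the number of edges.
-/

namespace SSKG

/-- `ℕ^k`. -/
abbrev NK (k : ℕ) := Fin k → ℕ
/-- `ℤ^k`. -/
abbrev ZK (k : ℕ) := Fin k → ℤ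

lemma le0 {k : ℕ} (p : NK k) : 0 ≤ p := Pi.le_def.mpr fun i => Nat.zero_le (p i)

/-- A (row-finite, source-free, countable) `k`-graph: a countable small category with a
degree functor `d` into `ℕ^k` satisfying the unique factorization property. -/
structure KGraph (k : ℕ) where
  Obj : Type
  Mor : Type
  countable_mor : Countable Mor
  r : Mor → Obj
  s : Mor → Obj
  d : Mor → NK k
  ofObj : Obj → Mor
  comp : (μ ν : Mor) → s μ = r ν → Mor
  r_ofObj : ∀ v, r (ofObj v) = v
  s_ofObj : ∀ v, s (ofObj v) = v
  d_ofObj : ∀ v, d (ofObj v) = 0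
  eq_ofObj_of_d_eq_zero : ∀ μ, d μ = 0 → ∃ v, μ = ofObj v
  r_comp : ∀ μ ν h, r (comp μ ν h) = r μ
  s_comp : ∀ μ ν h, s (comp μ ν h) = s ν
  d_comp : ∀ μ ν h, d (comp μ ν h) = d μ + d ν
  comp_ofObj : ∀ μ (h : s μ = r (ofObj (s μ))), comp μ (ofObj (s μ)) h = μ
  ofObj_comp : ∀ μ (h : s (ofObj (r μ)) = r μ), comp (ofObj (r μ)) μ h = μ
  comp_assoc : ∀ μ ν ρ (h₁ : s μ = r ν) (h₂ : s ν = r ρ),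
      comp (comp μ ν h₁) ρ ((s_comp μ ν h₁).trans h₂)
        = comp μ (comp ν ρ h₂) (h₁.trans (r_comp ν ρ h₂).symm)
  factor_exists : ∀ μ (n m : NK k), d μ = n + m →
      ∃ (α β : Mor) (h : s α = r β), d α = n ∧ d β = m ∧ comp α β h = μ
  factor_unique : ∀ (α β α' β' : Mor) (h : s α = r β) (h' : s α' = r β'),
      d α = d α' → comp α β h = comp α' β' h' → α = α' ∧ β = β'
  row_finite : ∀ (v : Obj) (n : NK k), {μ : Mor | r μ = v ∧ d μ = n}.Finite
  no_sources : ∀ (v : Obj) (n : NK k), ∃ μ : Mor, r μ = v ∧ d μ = n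

lemma KGraph.comp_congr {k : ℕ} (Λ : KGraph k) {μ ν ν' : Λ.Mor} (hν : ν = ν')
    (h : Λ.s μ = Λ.r ν) (h' : Λ.s μ = Λ.r ν') : Λ.comp μ ν h = Λ.comp μ ν' h' := by
  cases hν; rfl

/-- An edge: a morphism of degree `e_i` for some `i`. -/
def IsEdge {k : ℕ} (Λ : KGraph k) (μ : Λ.Mor) : Prop := ∃ i : Fin k, Λ.d μ = Pi.single i 1

/-- Membership in `Λ⁰ ∪ Λᵉ` (a vertex or an edge). -/
def VorE {k : ℕ} (Λ : KGraph k) (μ : Λ.Mor) : Prop := Λ.d μ = 0 ∨ IsEdge Λ μ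

/-- A self-similar action of a group `G` on a `k`-graph `Λ`: an action by degree-,
range- and source-preserving automorphisms, together with a restriction map
`(g, μ) ↦ g|_μ` satisfying the Exel–Pardo style axioms. -/
structure SelfSimilar (k : ℕ) (G : Type) [Group G] (Λ : KGraph k) where
  act : G → Λ.Mor → Λ.Mor
  res : G → Λ.Mor → G
  act_one : ∀ μ, act 1 μ = μ
  act_mul : ∀ g h μ, act (g * h) μ = act g (act h μ)
  act_d : ∀ g μ, Λ.d (act g μ) = Λ.d μ
  act_ofObj_r : ∀ g μ, act g (Λ.ofObj (Λ.r μ)) = Λ.ofObj (Λ.r (act g μ))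
  act_ofObj_s : ∀ g μ, act g (Λ.ofObj (Λ.s μ)) = Λ.ofObj (Λ.s (act g μ))
  compat : ∀ g μ ν (h : Λ.s μ = Λ.r ν), Λ.s (act g μ) = Λ.r (act (res g μ) ν)
  act_comp : ∀ g μ ν (h : Λ.s μ = Λ.r ν),
      act g (Λ.comp μ ν h) = Λ.comp (act g μ) (act (res g μ) ν) (compat g μ ν h)
  res_ofObj : ∀ g v, res g (Λ.ofObj v) = g
  res_comp : ∀ g μ ν (h : Λ.s μ = Λ.r ν), res g (Λ.comp μ ν h) = res (res g μ) ν
  res_one : ∀ μ, res 1 μ = 1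
  res_mul : ∀ g h μ, res (g * h) μ = res g (act h μ) * res h μ

variable {k : ℕ} {G : Type} [Group G] {Λ : KGraph k}

/-- The induced action of `G` on the vertices `Λ⁰`. -/
def SelfSimilar.actV (S : SelfSimilar k G Λ) (g : G) (v : Λ.Obj) : Λ.Obj :=
  Λ.s (S.act g (Λ.ofObj v))

/-- The action is pseudo free. -/
def SelfSimilar.PseudoFree (S : SelfSimilar k G Λ) : Prop :=
  ∀ (g : G) (μ : Λ.Mor), S.act g μ = μ → S.res g μ = 1 → g = 1

/-- An infinite path in `Λ`: a degree-preserving functor `Ω_k → Λ`, recorded through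
its segments `x(p,q)` for `p ≤ q`. -/
structure InfPath {k : ℕ} (Λ : KGraph k) where
  seg : ∀ p q : NK k, p ≤ q → Λ.Mor
  d_seg : ∀ p q (h : p ≤ q), Λ.d (seg p q h) = fun i => q i - p i
  src_seg : ∀ p q m (h₁ : p ≤ q) (h₂ : q ≤ m), Λ.s (seg p q h₁) = Λ.r (seg q m h₂)
  comp_seg : ∀ p q m (h₁ : p ≤ q) (h₂ : q ≤ m),
      Λ.comp (seg p q h₁) (seg q m h₂) (src_seg p q m h₁ h₂) = seg p m (h₁.trans h₂)

lemma InfPath.ext' {x y : InfPath Λ} (h : x.seg = y.seg) : x = y := by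
  cases x; cases y; cases h; rfl

/-- The shift `σ^p(x)`. -/
def InfPath.shift (x : InfPath Λ) (p : NK k) : InfPath Λ where
  seg m n h := x.seg (m + p) (n + p) (add_le_add_left h p)
  d_seg m n h := by
    rw [x.d_seg]; funext i; simp only [Pi.add_apply]; omega
  src_seg m n l h₁ h₂ := x.src_seg _ _ _ _ _
  comp_seg m n l h₁ h₂ := x.comp_seg _ _ _ _ _

/-- The action of `G` on infinite paths: `(g·x)(p,q) = g|_{x(0,p)} · x(p,q)`. -/
def SelfSimilar.actInf (S : SelfSimilar k G Λ) (g : G) (x : InfPath Λ) : InfPath Λ where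
  seg p q h := S.act (S.res g (x.seg 0 p (le0 p))) (x.seg p q h)
  d_seg p q h := by rw [S.act_d, x.d_seg]
  src_seg p q m h₁ h₂ := by
    have key : S.res g (x.seg 0 q (le0 q))
        = S.res (S.res g (x.seg 0 p (le0 p))) (x.seg p q h₁) := by
      rw [← S.res_comp g (x.seg 0 p (le0 p)) (x.seg p q h₁) (x.src_seg 0 p q (le0 p) h₁),
        x.comp_seg 0 p q (le0 p) h₁]
    beta_reduce
    rw [key]
    exact S.compat _ _ _ (x.src_seg p q m h₁ h₂)
  comp_seg p q m h₁ h₂ := by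
    have key : S.res g (x.seg 0 q (le0 q))
        = S.res (S.res g (x.seg 0 p (le0 p))) (x.seg p q h₁) := by
      rw [← S.res_comp g (x.seg 0 p (le0 p)) (x.seg p q h₁) (x.src_seg 0 p q (le0 p) h₁),
        x.comp_seg 0 p q (le0 p) h₁]
    beta_reduce
    rw [← x.comp_seg p q m h₁ h₂, S.act_comp]
    exact Λ.comp_congr (by rw [key]) _ _

/-- The restriction cocycle `g|_x : ℕ^k → G`, `g|_x(p) = g|_{x(0,p)}`. -/
def SelfSimilar.resInf (S : SelfSimilar k G Λ) (g : G) (x : InfPath Λ) : NK k → G :=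
  fun p => S.res g (x.seg 0 p (le0 p))

/-- `IsConcat μ x y` says that `y = μx`, the concatenation of the finite path `μ`
(with `x(0,0) = s(μ)`) and the infinite path `x`. -/
def IsConcat (Λ : KGraph k) (μ : Λ.Mor) (x y : InfPath Λ) : Prop :=
  x.seg 0 0 le_rfl = Λ.ofObj (Λ.s μ) ∧
  y.seg 0 (Λ.d μ) (le0 _) = μ ∧
  ∀ m n (h : m ≤ n), y.seg (Λ.d μ + m) (Λ.d μ + n) (add_le_add_right h _) = x.seg m n h

/-- The cylinder set `Z(μ)`. -/
def cylinder (Λ : KGraph k) (μ : Λ.Mor) : Set (InfPath Λ) :=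
  {x : InfPath Λ | x.seg 0 (Λ.d μ) (le0 _) = μ}

/-- The cylinder-set topology on `Λ^∞`. -/
instance instTopInfPath (Λ : KGraph k) : TopologicalSpace (InfPath Λ) :=
  TopologicalSpace.generateFrom {U | ∃ μ : Λ.Mor, U = cylinder Λ μ}

/-- `Λ` is `G`-cofinal. -/
def GCofinal (S : SelfSimilar k G Λ) : Prop :=
  ∀ (x : InfPath Λ) (v : Λ.Obj), ∃ (p : NK k) (μ : Λ.Mor) (g : G),
    Λ.ofObj (Λ.s μ) = x.seg p p le_rfl ∧ Λ.r μ = S.actV g v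

/-- `Λ` is `G`-aperiodic. -/
def GAperiodic (S : SelfSimilar k G Λ) : Prop :=
  ∀ v : Λ.Obj, ∃ x : InfPath Λ, x.seg 0 0 le_rfl = Λ.ofObj v ∧
    ∀ (g : G) (p q : NK k), g ≠ 1 ∨ p ≠ q → x.shift p ≠ S.actInf g (x.shift q)

/-- A subset `U ⊆ Λ^∞` is invariant for the self-similar action. -/
def InvariantSet (S : SelfSimilar k G Λ) (U : Set (InfPath Λ)) : Prop :=
  ∀ (g : G) (μ ν : Λ.Mor) (x z y : InfPath Λ),
    Λ.s μ = S.actV g (Λ.s ν) → IsConcat Λ ν x z → IsConcat Λ μ (S.actInf g x) y →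
    z ∈ U → y ∈ U

/-- The minimal common extensions `Λ^min(μ,ν)`. -/
def Lmin (Λ : KGraph k) (μ ν : Λ.Mor) : Set (Λ.Mor × Λ.Mor) :=
  {p | ∃ (h₁ : Λ.s μ = Λ.r p.1) (h₂ : Λ.s ν = Λ.r p.2),
      Λ.comp μ p.1 h₁ = Λ.comp ν p.2 h₂ ∧ Λ.d (Λ.comp μ p.1 h₁) = Λ.d μ ⊔ Λ.d ν}

/-- The group `C(ℕ^k, G)` of all functions `ℕ^k → G` under pointwise multiplication. -/
abbrev CkG (k : ℕ) (G : Type) [Group G] := NK k → G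

/-- The normal subgroup of eventually trivial functions. -/
def tailTrivial (k : ℕ) (G : Type) [Group G] : Subgroup (CkG k G) where
  carrier := {f | ∃ z : NK k, ∀ p, z ≤ p → f p = 1}
  one_mem' := ⟨0, fun _ _ => rfl⟩
  mul_mem' := by
    rintro f g ⟨z₁, h₁⟩ ⟨z₂, h₂⟩
    exact ⟨z₁ ⊔ z₂, fun p hp => by
      rw [Pi.mul_apply, h₁ p (le_trans le_sup_left hp), h₂ p (le_trans le_sup_right hp),
        one_mul]⟩
  inv_mem' := by
    rintro f ⟨z, h⟩
    exact ⟨z, fun p hp => by rw [Pi.inv_apply, h p hp, inv_one]⟩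

instance tailTrivialNormal (k : ℕ) (G : Type) [Group G] : (tailTrivial k G).Normal := by
  constructor
  rintro f ⟨z, hz⟩ g
  exact ⟨z, fun p hp => by
    simp only [Pi.mul_apply, Pi.inv_apply, hz p hp, mul_one, mul_inv_cancel]⟩

/-- The quotient group `Q(ℕ^k, G) = C(ℕ^k,G)/∼`. -/
abbrev QkG (k : ℕ) (G : Type) [Group G] := CkG k G ⧸ tailTrivial k G

/-- Coercion `ℕ^k → ℤ^k`. -/
def toZ {k : ℕ} (p : NK k) : ZK k := fun i => (p i : ℤ)

open scoped Classical in
/-- The translation `T_z` on functions `ℕ^k → G`, for `z ∈ ℤ^k`. -/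
noncomputable def transFun {k : ℕ} {G : Type} [Group G] (z : ZK k) (f : CkG k G) : CkG k G :=
  fun p => if (∀ i, z i ≤ (p i : ℤ)) then f (fun i => ((p i : ℤ) - z i).toNat) else 1

/-- The ambient space `Λ^∞ × (Q(ℕ^k,G) ⋊ ℤ^k) × Λ^∞` containing the self-similar
path groupoid (as a set). -/
abbrev Triple (k : ℕ) (G : Type) [Group G] (Λ : KGraph k) :=
  InfPath Λ × (QkG k G × ZK k) × InfPath Λ

/-- The basic set `Z(μ, g, ν)` of the self-similar path groupoid. -/
def Zset (S : SelfSimilar k G Λ) (μ : Λ.Mor) (g : G) (ν : Λ.Mor) : Set (Triple k G Λ) :=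
  {t | ∃ x y z : InfPath Λ, IsConcat Λ ν x z ∧ IsConcat Λ μ (S.actInf g x) y ∧
    t = (y, ((QuotientGroup.mk (transFun (toZ (Λ.d μ)) (S.resInf g x)) : QkG k G),
      toZ (Λ.d μ) - toZ (Λ.d ν)), z)}

/-- The family `B_{G,Λ}` of basic sets. -/
def BGL (S : SelfSimilar k G Λ) : Set (Set (Triple k G Λ)) :=
  {A | ∃ (μ ν : Λ.Mor) (g : G), Λ.s μ = S.actV g (Λ.s ν) ∧ A = Zset S μ g ν}

/-- The self-similar path groupoid `G_{G,Λ}` (as a set of triples). -/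
def Gpd (S : SelfSimilar k G Λ) : Set (Triple k G Λ) :=
  {t | ∃ (g : G) (μ ν : Λ.Mor), Λ.s μ = S.actV g (Λ.s ν) ∧ t ∈ Zset S μ g ν}

/-- The topology on `G_{G,Λ}` generated by the basic sets. -/
def gpdTop (S : SelfSimilar k G Λ) : TopologicalSpace {t : Triple k G Λ // t ∈ Gpd S} :=
  TopologicalSpace.generateFrom
    {A | ∃ (μ ν : Λ.Mor) (g : G), A = {t | (t : Triple k G Λ) ∈ Zset S μ g ν}}


theorem single_le_of_single_add_eq {i j : Fin k} (hij : i ≠ j) {a b : NK k}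
    (h : Pi.single i 1 + a = Pi.single j 1 + b) : (Pi.single j 1 : NK k) ≤ a := fun x => by
  have hx := congrFun h x
  rcases eq_or_ne x j with rfl | hxj
  · simp only [Pi.add_apply, Pi.single_eq_same, Pi.single_eq_of_ne' hij] at hx ⊢
    omega
  · simp [Pi.single_eq_of_ne hxj]

theorem IsEdge.d_ne_zero {μ : Λ.Mor} (he : IsEdge Λ μ) : Λ.d μ ≠ 0 := by
  obtain ⟨i, hi⟩ := he
  rw [hi]
  exact Pi.single_ne_zero_iff.mpr one_ne_zero

namespace KGraph

variable (Λ)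

theorem ofObj_injective : Function.Injective Λ.ofObj := fun v w h => by
  rw [← Λ.r_ofObj v, h, Λ.r_ofObj]

theorem d_lt_d_comp {α β : Λ.Mor} (h : Λ.s α = Λ.r β) (hα : Λ.d α ≠ 0) :
    Λ.d β < Λ.d (Λ.comp α β h) := by
  rw [Λ.d_comp]
  exact lt_add_of_pos_left _ (pos_iff_ne_zero.mpr hα)

theorem exists_comp_of_le {μ : Λ.Mor} {n : NK k} (hn : n ≤ Λ.d μ) :
    ∃ (α β : Λ.Mor) (h : Λ.s α = Λ.r β), Λ.d α = n ∧ Λ.comp α β h = μ := by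
  obtain ⟨α, β, h, hα, -, hμ⟩ := Λ.factor_exists μ n (Λ.d μ - n) (add_tsub_cancel_of_le hn).symm
  exact ⟨α, β, h, hα, hμ⟩

theorem exists_edge_comp {μ : Λ.Mor} (hμ : Λ.d μ ≠ 0) :
    ∃ p : Λ.Mor × Λ.Mor, ∃ h : Λ.s p.1 = Λ.r p.2, IsEdge Λ p.1 ∧ Λ.comp p.1 p.2 h = μ := by
  obtain ⟨i, hi⟩ := Function.ne_iff.mp hμ
  have hle : (Pi.single i 1 : NK k) ≤ Λ.d μ := fun j => by
    rcases eq_or_ne j i with rfl | hj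
    · simpa [Nat.one_le_iff_ne_zero] using hi
    · simp [Pi.single_eq_of_ne hj]
  obtain ⟨α, β, h, hα, hμ⟩ := Λ.exists_comp_of_le hle
  exact ⟨(α, β), h, ⟨i, hα⟩, hμ⟩

noncomputable def splitEdge (μ : Λ.Mor) (hμ : Λ.d μ ≠ 0) : Λ.Mor × Λ.Mor :=
  (Λ.exists_edge_comp hμ).choose

theorem splitEdge_spec (μ : Λ.Mor) (hμ : Λ.d μ ≠ 0) :
    ∃ h : Λ.s (Λ.splitEdge μ hμ).1 = Λ.r (Λ.splitEdge μ hμ).2,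
      IsEdge Λ (Λ.splitEdge μ hμ).1 ∧ Λ.comp _ _ h = μ :=
  (Λ.exists_edge_comp hμ).choose_spec

theorem d_splitEdge_snd_lt (μ : Λ.Mor) (hμ : Λ.d μ ≠ 0) :
    Λ.d (Λ.splitEdge μ hμ).2 < Λ.d μ := by
  obtain ⟨h, he, hμ'⟩ := Λ.splitEdge_spec μ hμ
  calc _ < Λ.d (Λ.comp _ _ h) := Λ.d_lt_d_comp h he.d_ne_zero
    _ = Λ.d μ := by rw [hμ']

theorem induction_on_d {motive : Λ.Mor → Prop} (μ : Λ.Mor)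
    (ih : ∀ μ, (∀ ν, Λ.d ν < Λ.d μ → motive ν) → motive μ) : motive μ :=
  (InvImage.wf Λ.d wellFounded_lt).induction μ ih

theorem induction_on_edges {motive : Λ.Mor → Prop} (μ : Λ.Mor)
    (vertex : ∀ μ, Λ.d μ = 0 → motive μ)
    (comp : ∀ e ν (h : Λ.s e = Λ.r ν), IsEdge Λ e → motive ν → motive (Λ.comp e ν h)) :
    motive μ := by
  induction μ using Λ.induction_on_d with
  | ih μ ih =>
    by_cases hμ : Λ.d μ = 0
    · exact vertex μ hμ
    obtain ⟨h, he, hμ'⟩ := Λ.splitEdge_spec μ hμ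
    rw [← hμ']
    exact comp _ _ h he (ih _ (Λ.d_splitEdge_snd_lt μ hμ))

theorem exists_edge_square {e ν E V : Λ.Mor} (he : IsEdge Λ e) (hE : IsEdge Λ E)
    (hne : Λ.d e ≠ Λ.d E) (h : Λ.s e = Λ.r ν) (h' : Λ.s E = Λ.r V)
    (heq : Λ.comp e ν h = Λ.comp E V h') :
    ∃ (f f' ν₁ : Λ.Mor) (hf : Λ.s e = Λ.r f) (hf' : Λ.s E = Λ.r f') (h₁ : Λ.s f = Λ.r ν₁)
      (h₁' : Λ.s f' = Λ.r ν₁), IsEdge Λ f ∧ IsEdge Λ f' ∧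
      Λ.comp e f hf = Λ.comp E f' hf' ∧ Λ.comp f ν₁ h₁ = ν ∧ Λ.comp f' ν₁ h₁' = V := by
  obtain ⟨i, hi⟩ := he
  obtain ⟨j, hj⟩ := hE
  have hij : i ≠ j := fun hij => hne (by rw [hi, hj, hij])
  have hd : Pi.single i 1 + Λ.d ν = Pi.single j 1 + Λ.d V := by
    rw [← hi, ← hj, ← Λ.d_comp e ν h, ← Λ.d_comp E V h', heq]
  obtain ⟨f, ν₁, h₁, hf, rfl⟩ := Λ.exists_comp_of_le (single_le_of_single_add_eq hij hd)
  obtain ⟨f', ν₂, h₂, hf', rfl⟩ := Λ.exists_comp_of_le (single_le_of_single_add_eq hij.symm hd.symm)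
  have hef : Λ.s e = Λ.r f := h.trans (Λ.r_comp f ν₁ h₁)
  have hEf' : Λ.s E = Λ.r f' := h'.trans (Λ.r_comp f' ν₂ h₂)
  have huniq := Λ.factor_unique (Λ.comp e f hef) ν₁ (Λ.comp E f' hEf') ν₂
    ((Λ.s_comp e f hef).trans h₁) ((Λ.s_comp E f' hEf').trans h₂)
    (by rw [Λ.d_comp, Λ.d_comp, hi, hj, hf, hf', add_comm])
    (by rw [Λ.comp_assoc, Λ.comp_assoc]; exact heq)
  obtain ⟨hsq, rfl⟩ := huniq
  exact ⟨f, f', ν₁, hef, hEf', h₁, h₂, ⟨j, hf⟩, ⟨i, hf'⟩, hsq, rfl, rfl⟩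

open Classical in
/-- Junk (`μ`) on non-composable pairs; it spares composability proofs when rewriting. -/
noncomputable def concat (μ ν : Λ.Mor) : Λ.Mor :=
  if h : Λ.s μ = Λ.r ν then Λ.comp μ ν h else μ

variable {Λ}

theorem concat_eq_comp {μ ν : Λ.Mor} (h : Λ.s μ = Λ.r ν) : Λ.concat μ ν = Λ.comp μ ν h :=
  dif_pos h

theorem r_concat (μ ν : Λ.Mor) : Λ.r (Λ.concat μ ν) = Λ.r μ := by
  unfold concat
  split_ifs with h
  · exact Λ.r_comp μ ν h
  · rfl

theorem ofObj_r_concat (μ : Λ.Mor) : Λ.concat (Λ.ofObj (Λ.r μ)) μ = μ := by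
  rw [concat_eq_comp (Λ.s_ofObj _), Λ.ofObj_comp]

theorem concat_assoc {μ ν ρ : Λ.Mor} (h₁ : Λ.s μ = Λ.r ν) (h₂ : Λ.s ν = Λ.r ρ) :
    Λ.concat (Λ.concat μ ν) ρ = Λ.concat μ (Λ.concat ν ρ) := by
  rw [concat_eq_comp h₁, concat_eq_comp h₂, concat_eq_comp ((Λ.s_comp μ ν h₁).trans h₂),
    concat_eq_comp (h₁.trans (Λ.r_comp ν ρ h₂).symm), Λ.comp_assoc]

end KGraph

/-- A group action and restriction map on `Λ⁰ ∪ Λᵉ` satisfying conditions (i)–(vii). -/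
structure EdgeSelfSimilar (G : Type) [Group G] (Λ : KGraph k) where
  act : G → Λ.Mor → Λ.Mor
  res : G → Λ.Mor → G
  act_one : ∀ μ, VorE Λ μ → act 1 μ = μ
  act_mul : ∀ (g h : G) (μ), VorE Λ μ → act (g * h) μ = act g (act h μ)
  d_act : ∀ g μ, VorE Λ μ → Λ.d (act g μ) = Λ.d μ
  act_ofObj_s : ∀ g μ, IsEdge Λ μ → act g (Λ.ofObj (Λ.s μ)) = Λ.ofObj (Λ.s (act g μ))
  act_ofObj_r : ∀ g μ, IsEdge Λ μ → act g (Λ.ofObj (Λ.r μ)) = Λ.ofObj (Λ.r (act g μ))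
  act_res_ofObj_s : ∀ g μ ν, IsEdge Λ μ → Λ.s μ = Λ.r ν →
    act (res g μ) (Λ.ofObj (Λ.s ν)) = act g (Λ.ofObj (Λ.s ν))
  comp_act_eq_of_comp_eq : ∀ (g : G) (μ ν α β : Λ.Mor) (h₁ : Λ.s μ = Λ.r ν)
    (h₂ : Λ.s α = Λ.r β), IsEdge Λ μ → IsEdge Λ ν → IsEdge Λ α → IsEdge Λ β →
    Λ.comp μ ν h₁ = Λ.comp α β h₂ →
    ∀ (p₁ : Λ.s (act g μ) = Λ.r (act (res g μ) ν)) (p₂ : Λ.s (act g α) = Λ.r (act (res g α) β)),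
      Λ.comp (act g μ) (act (res g μ) ν) p₁ = Λ.comp (act g α) (act (res g α) β) p₂
  res_ofObj : ∀ g v, res g (Λ.ofObj v) = g
  res_res_eq_of_comp_eq : ∀ (g : G) (μ ν α β : Λ.Mor) (h₁ : Λ.s μ = Λ.r ν)
    (h₂ : Λ.s α = Λ.r β), IsEdge Λ μ → IsEdge Λ ν → IsEdge Λ α → IsEdge Λ β →
    Λ.comp μ ν h₁ = Λ.comp α β h₂ → res (res g μ) ν = res (res g α) β
  res_mul : ∀ (g h : G) (μ), VorE Λ μ → res (g * h) μ = res g (act h μ) * res h μ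

namespace EdgeSelfSimilar

variable (A : EdgeSelfSimilar G Λ)

def actObj (g : G) (v : Λ.Obj) : Λ.Obj := Λ.r (A.act g (Λ.ofObj v))

theorem act_ofObj (g : G) (v : Λ.Obj) : A.act g (Λ.ofObj v) = Λ.ofObj (A.actObj g v) := by
  have hd : Λ.d (A.act g (Λ.ofObj v)) = 0 :=
    (A.d_act g _ (Or.inl (Λ.d_ofObj v))).trans (Λ.d_ofObj v)
  obtain ⟨w, hw⟩ := Λ.eq_ofObj_of_d_eq_zero _ hd
  rw [actObj, hw, Λ.r_ofObj]

variable {A}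

theorem r_act {g : G} {e : Λ.Mor} (he : IsEdge Λ e) : Λ.r (A.act g e) = A.actObj g (Λ.r e) :=
  Λ.ofObj_injective (by rw [← act_ofObj, A.act_ofObj_r g e he])

theorem s_act {g : G} {e : Λ.Mor} (he : IsEdge Λ e) : Λ.s (A.act g e) = A.actObj g (Λ.s e) :=
  Λ.ofObj_injective (by rw [← act_ofObj, A.act_ofObj_s g e he])

theorem actObj_res {g : G} {e ν : Λ.Mor} (he : IsEdge Λ e) (h : Λ.s e = Λ.r ν) :
    A.actObj (A.res g e) (Λ.s ν) = A.actObj g (Λ.s ν) :=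
  Λ.ofObj_injective (by rw [← act_ofObj, ← act_ofObj, A.act_res_ofObj_s g e ν he h])

theorem actObj_res_s {g : G} {e : Λ.Mor} (he : IsEdge Λ e) :
    A.actObj (A.res g e) (Λ.s e) = A.actObj g (Λ.s e) := by
  simpa only [Λ.s_ofObj] using A.actObj_res (g := g) he (Λ.r_ofObj (Λ.s e)).symm

theorem s_act_eq_r_act {g : G} {e f : Λ.Mor} (he : IsEdge Λ e) (hf : IsEdge Λ f)
    (h : Λ.s e = Λ.r f) : Λ.s (A.act g e) = Λ.r (A.act (A.res g e) f) := by
  rw [s_act he, r_act hf, ← h, actObj_res_s he]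

variable (A)

-- Otherwise `termination_by Λ.d μ` would use `sizeOf`, not the product order on `ℕ^k`.
attribute [local instance] WellFoundedLT.toWellFoundedRelation

noncomputable def extAct (g : G) (μ : Λ.Mor) : Λ.Mor :=
  if hμ : Λ.d μ = 0 then A.act g μ
  else Λ.concat (A.act g (Λ.splitEdge μ hμ).1)
    (extAct (A.res g (Λ.splitEdge μ hμ).1) (Λ.splitEdge μ hμ).2)
termination_by Λ.d μ
decreasing_by exact Λ.d_splitEdge_snd_lt μ hμ

noncomputable def extRes (g : G) (μ : Λ.Mor) : G :=
  if hμ : Λ.d μ = 0 then A.res g μ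
  else extRes (A.res g (Λ.splitEdge μ hμ).1) (Λ.splitEdge μ hμ).2
termination_by Λ.d μ
decreasing_by exact Λ.d_splitEdge_snd_lt μ hμ

variable {A}

theorem extAct_of_d_eq_zero (g : G) {μ : Λ.Mor} (hμ : Λ.d μ = 0) : A.extAct g μ = A.act g μ := by
  rw [extAct, dif_pos hμ]

theorem extRes_of_d_eq_zero (g : G) {μ : Λ.Mor} (hμ : Λ.d μ = 0) : A.extRes g μ = A.res g μ := by
  rw [extRes, dif_pos hμ]

theorem extAct_ofObj (g : G) (v : Λ.Obj) : A.extAct g (Λ.ofObj v) = Λ.ofObj (A.actObj g v) := by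
  rw [extAct_of_d_eq_zero g (Λ.d_ofObj v), act_ofObj]

theorem extRes_ofObj (g : G) (v : Λ.Obj) : A.extRes g (Λ.ofObj v) = g := by
  rw [extRes_of_d_eq_zero g (Λ.d_ofObj v), A.res_ofObj]

theorem r_extAct (g : G) (μ : Λ.Mor) : Λ.r (A.extAct g μ) = A.actObj g (Λ.r μ) := by
  by_cases hμ : Λ.d μ = 0
  · obtain ⟨v, rfl⟩ := Λ.eq_ofObj_of_d_eq_zero μ hμ
    rw [extAct_ofObj, Λ.r_ofObj, Λ.r_ofObj]
  obtain ⟨h, he, hμ'⟩ := Λ.splitEdge_spec μ hμ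
  rw [extAct, dif_neg hμ, Λ.r_concat, r_act he, ← Λ.r_comp _ _ h, hμ']

theorem s_act_eq_r_extAct {g : G} {e ν : Λ.Mor} (he : IsEdge Λ e) (h : Λ.s e = Λ.r ν) :
    Λ.s (A.act g e) = Λ.r (A.extAct (A.res g e) ν) := by
  rw [s_act he, r_extAct, ← h, actObj_res_s he]

theorem extAct_extRes_comp_edge {e ν : Λ.Mor} (he : IsEdge Λ e) (h : Λ.s e = Λ.r ν) (g : G) :
    A.extAct g (Λ.comp e ν h) = Λ.concat (A.act g e) (A.extAct (A.res g e) ν) ∧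
      A.extRes g (Λ.comp e ν h) = A.extRes (A.res g e) ν := by
  generalize hμ : Λ.comp e ν h = μ
  induction μ using Λ.induction_on_d generalizing g e ν with
  | ih μ ih =>
    have hdμ : Λ.d μ ≠ 0 := hμ ▸ (Λ.d_lt_d_comp h he.d_ne_zero).ne_bot
    obtain ⟨hEV, hE, hEVμ⟩ := Λ.splitEdge_spec μ hdμ
    rw [extAct, dif_neg hdμ, extRes, dif_neg hdμ]
    generalize Λ.splitEdge μ hdμ = p at hEV hE hEVμ
    obtain ⟨E, V⟩ := p
    dsimp only at hEV hE hEVμ ⊢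
    by_cases hdeg : Λ.d E = Λ.d e
    · obtain ⟨rfl, rfl⟩ := Λ.factor_unique E V e ν hEV h hdeg (hEVμ.trans hμ.symm)
      exact ⟨rfl, rfl⟩
    have hν : Λ.d ν < Λ.d μ := hμ ▸ Λ.d_lt_d_comp h he.d_ne_zero
    have hV : Λ.d V < Λ.d μ := hEVμ ▸ Λ.d_lt_d_comp hEV hE.d_ne_zero
    obtain ⟨f, f', ν₁, hf, hf', h₁, h₁', hf_edge, hf'_edge, hsq, rfl, rfl⟩ :=
      Λ.exists_edge_square he hE (Ne.symm hdeg) h hEV (hμ.trans hEVμ.symm)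
    obtain ⟨ihV_act, ihV_res⟩ := ih _ hV hf'_edge h₁' (A.res g E) rfl
    obtain ⟨ihν_act, ihν_res⟩ := ih _ hν hf_edge h₁ (A.res g e) rfl
    have hres := A.res_res_eq_of_comp_eq g e f E f' hf hf' he hf_edge hE hf'_edge hsq
    refine ⟨?_, by rw [ihV_res, ihν_res, hres]⟩
    rw [ihV_act, ihν_act,
      ← Λ.concat_assoc (s_act_eq_r_act hE hf'_edge hf') (s_act_eq_r_extAct hf'_edge h₁'),
      ← Λ.concat_assoc (s_act_eq_r_act he hf_edge hf) (s_act_eq_r_extAct hf_edge h₁),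
      Λ.concat_eq_comp (s_act_eq_r_act hE hf'_edge hf'),
      Λ.concat_eq_comp (s_act_eq_r_act he hf_edge hf),
      A.comp_act_eq_of_comp_eq g e f E f' hf hf' he hf_edge hE hf'_edge hsq, hres]

theorem extAct_comp_edge {e ν : Λ.Mor} (he : IsEdge Λ e) (h : Λ.s e = Λ.r ν) (g : G) :
    A.extAct g (Λ.comp e ν h) = Λ.concat (A.act g e) (A.extAct (A.res g e) ν) :=
  (extAct_extRes_comp_edge he h g).1

theorem extRes_comp_edge {e ν : Λ.Mor} (he : IsEdge Λ e) (h : Λ.s e = Λ.r ν) (g : G) :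
    A.extRes g (Λ.comp e ν h) = A.extRes (A.res g e) ν :=
  (extAct_extRes_comp_edge he h g).2

theorem extAct_extRes_of_vorE (g : G) {μ : Λ.Mor} (hμ : VorE Λ μ) :
    A.extAct g μ = A.act g μ ∧ A.extRes g μ = A.res g μ := by
  rcases hμ with hμ | he
  · exact ⟨extAct_of_d_eq_zero g hμ, extRes_of_d_eq_zero g hμ⟩
  have h : Λ.s μ = Λ.r (Λ.ofObj (Λ.s μ)) := (Λ.r_ofObj _).symm
  have hact := extAct_comp_edge (A := A) he h g
  have hres := extRes_comp_edge (A := A) he h g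
  rw [Λ.comp_ofObj] at hact hres
  refine ⟨?_, by rw [hres, extRes_ofObj]⟩
  rw [hact, extAct_ofObj, actObj_res_s he, ← s_act he,
    Λ.concat_eq_comp (Λ.r_ofObj _).symm, Λ.comp_ofObj]

theorem d_extAct (g : G) (μ : Λ.Mor) : Λ.d (A.extAct g μ) = Λ.d μ := by
  induction μ using Λ.induction_on_edges generalizing g with
  | vertex μ hμ => rw [extAct_of_d_eq_zero g hμ, A.d_act g μ (Or.inl hμ)]
  | comp e ν h he ih =>
    rw [extAct_comp_edge he h, Λ.concat_eq_comp (s_act_eq_r_extAct he h), Λ.d_comp, Λ.d_comp,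
      A.d_act g e (Or.inr he), ih]

theorem s_extAct (g : G) (μ : Λ.Mor) : Λ.s (A.extAct g μ) = A.actObj g (Λ.s μ) := by
  induction μ using Λ.induction_on_edges generalizing g with
  | vertex μ hμ =>
    obtain ⟨v, rfl⟩ := Λ.eq_ofObj_of_d_eq_zero μ hμ
    rw [extAct_ofObj, Λ.s_ofObj, Λ.s_ofObj]
  | comp e ν h he ih =>
    rw [extAct_comp_edge he h, Λ.concat_eq_comp (s_act_eq_r_extAct he h), Λ.s_comp, Λ.s_comp, ih,
      actObj_res he h]

theorem actObj_extRes (g : G) (μ : Λ.Mor) :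
    A.actObj (A.extRes g μ) (Λ.s μ) = A.actObj g (Λ.s μ) := by
  induction μ using Λ.induction_on_edges generalizing g with
  | vertex μ hμ =>
    obtain ⟨v, rfl⟩ := Λ.eq_ofObj_of_d_eq_zero μ hμ
    rw [extRes_ofObj]
  | comp e ν h he ih => rw [extRes_comp_edge he h, Λ.s_comp, ih, actObj_res he h]

theorem s_extAct_eq_r_extAct (g : G) {μ ν : Λ.Mor} (h : Λ.s μ = Λ.r ν) :
    Λ.s (A.extAct g μ) = Λ.r (A.extAct (A.extRes g μ) ν) := by
  rw [s_extAct, r_extAct, ← h, actObj_extRes]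

theorem extAct_comp (g : G) {μ ν : Λ.Mor} (h : Λ.s μ = Λ.r ν) :
    A.extAct g (Λ.comp μ ν h) = Λ.concat (A.extAct g μ) (A.extAct (A.extRes g μ) ν) := by
  induction μ using Λ.induction_on_edges generalizing g with
  | vertex μ hμ =>
    obtain ⟨v, rfl⟩ := Λ.eq_ofObj_of_d_eq_zero μ hμ
    obtain rfl : v = Λ.r ν := (Λ.s_ofObj v).symm.trans h
    rw [Λ.ofObj_comp, extAct_ofObj, extRes_ofObj, ← r_extAct, Λ.ofObj_r_concat]
  | comp e μ h' he ih =>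
    have hμν : Λ.s μ = Λ.r ν := (Λ.s_comp e μ h').symm.trans h
    rw [Λ.comp_assoc e μ ν h' hμν, extAct_comp_edge he, ih, extAct_comp_edge he,
      extRes_comp_edge he, Λ.concat_assoc (s_act_eq_r_extAct he h') (s_extAct_eq_r_extAct _ hμν)]

theorem extRes_comp (g : G) {μ ν : Λ.Mor} (h : Λ.s μ = Λ.r ν) :
    A.extRes g (Λ.comp μ ν h) = A.extRes (A.extRes g μ) ν := by
  induction μ using Λ.induction_on_edges generalizing g with
  | vertex μ hμ =>
    obtain ⟨v, rfl⟩ := Λ.eq_ofObj_of_d_eq_zero μ hμ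
    obtain rfl : v = Λ.r ν := (Λ.s_ofObj v).symm.trans h
    rw [Λ.ofObj_comp, extRes_ofObj]
  | comp e μ h' he ih =>
    have hμν : Λ.s μ = Λ.r ν := (Λ.s_comp e μ h').symm.trans h
    rw [Λ.comp_assoc e μ ν h' hμν, extRes_comp_edge he, ih, extRes_comp_edge he]

theorem res_one {μ : Λ.Mor} (hμ : VorE Λ μ) : A.res 1 μ = 1 := by
  have h := A.res_mul 1 1 μ hμ
  rw [one_mul, A.act_one μ hμ] at h
  exact right_eq_mul.mp h

theorem isEdge_act (g : G) {e : Λ.Mor} (he : IsEdge Λ e) : IsEdge Λ (A.act g e) := by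
  obtain ⟨i, hi⟩ := he
  exact ⟨i, (A.d_act g e (Or.inr ⟨i, hi⟩)).trans hi⟩

theorem extAct_one (μ : Λ.Mor) : A.extAct 1 μ = μ := by
  induction μ using Λ.induction_on_edges with
  | vertex μ hμ => rw [extAct_of_d_eq_zero 1 hμ, A.act_one μ (Or.inl hμ)]
  | comp e ν h he ih =>
    rw [extAct_comp_edge he h, res_one (Or.inr he), ih, A.act_one e (Or.inr he), Λ.concat_eq_comp h]

theorem extRes_one (μ : Λ.Mor) : A.extRes 1 μ = 1 := by
  induction μ using Λ.induction_on_edges with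
  | vertex μ hμ => rw [extRes_of_d_eq_zero 1 hμ, res_one (Or.inl hμ)]
  | comp e ν h he ih => rw [extRes_comp_edge he h, res_one (Or.inr he), ih]

theorem extAct_mul (g h : G) (μ : Λ.Mor) : A.extAct (g * h) μ = A.extAct g (A.extAct h μ) := by
  induction μ using Λ.induction_on_edges generalizing g h with
  | vertex μ hμ =>
    have hhμ : Λ.d (A.act h μ) = 0 := (A.d_act h μ (Or.inl hμ)).trans hμ
    rw [extAct_of_d_eq_zero _ hμ, extAct_of_d_eq_zero _ hμ, extAct_of_d_eq_zero _ hhμ,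
      A.act_mul g h μ (Or.inl hμ)]
  | comp e ν hν he ih =>
    rw [extAct_comp_edge he hν, extAct_comp_edge he hν,
      Λ.concat_eq_comp (s_act_eq_r_extAct (g := h) he hν),
      extAct_comp_edge (isEdge_act h he), A.act_mul g h e (Or.inr he), A.res_mul g h e (Or.inr he),
      ih]

theorem extRes_mul (g h : G) (μ : Λ.Mor) :
    A.extRes (g * h) μ = A.extRes g (A.extAct h μ) * A.extRes h μ := by
  induction μ using Λ.induction_on_edges generalizing g h with
  | vertex μ hμ =>
    have hhμ : Λ.d (A.act h μ) = 0 := (A.d_act h μ (Or.inl hμ)).trans hμ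
    rw [extRes_of_d_eq_zero _ hμ, extRes_of_d_eq_zero _ hμ, extAct_of_d_eq_zero _ hμ,
      extRes_of_d_eq_zero _ hhμ, A.res_mul g h μ (Or.inl hμ)]
  | comp e ν hν he ih =>
    rw [extRes_comp_edge he hν, extRes_comp_edge he hν, extAct_comp_edge he hν,
      Λ.concat_eq_comp (s_act_eq_r_extAct he hν), extRes_comp_edge (isEdge_act h he),
      A.res_mul g h e (Or.inr he), ih]

variable (A)

noncomputable def toSelfSimilar : SelfSimilar k G Λ where
  act := A.extAct
  res := A.extRes
  act_one := extAct_one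
  act_mul := extAct_mul
  act_d := d_extAct
  act_ofObj_r g μ := by rw [extAct_ofObj, r_extAct]
  act_ofObj_s g μ := by rw [extAct_ofObj, s_extAct]
  compat g _ _ h := s_extAct_eq_r_extAct g h
  act_comp g _ _ h := by rw [extAct_comp g h, Λ.concat_eq_comp]
  res_ofObj := extRes_ofObj
  res_comp g _ _ h := extRes_comp g h
  res_one := extRes_one
  res_mul := extRes_mul

attribute [ext] SelfSimilar

theorem eq_toSelfSimilar (S : SelfSimilar k G Λ)
    (hS : ∀ g μ, VorE Λ μ → S.act g μ = A.act g μ ∧ S.res g μ = A.res g μ) :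
    S = A.toSelfSimilar := by
  have key : ∀ μ g, S.act g μ = A.extAct g μ ∧ S.res g μ = A.extRes g μ := by
    intro μ
    induction μ using Λ.induction_on_edges with
    | vertex μ hμ =>
      intro g
      rw [extAct_of_d_eq_zero g hμ, extRes_of_d_eq_zero g hμ]
      exact hS g μ (Or.inl hμ)
    | comp e ν h he ih =>
      intro g
      obtain ⟨hact, hres⟩ := hS g e (Or.inr he)
      rw [extAct_comp_edge he h, extRes_comp_edge he h, S.act_comp, S.res_comp,
        ← Λ.concat_eq_comp, hact, hres, (ih _).1, (ih _).2]
      exact ⟨rfl, rfl⟩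
  ext g μ
  · exact (key μ g).1
  · exact (key μ g).2

end EdgeSelfSimilar

theorem stmt2_general {k : ℕ} (G : Type) [Group G] (Λ : KGraph k)
    (a : G → Λ.Mor → Λ.Mor) (ρ : G → Λ.Mor → G)
    (hone : ∀ μ, VorE Λ μ → a 1 μ = μ)
    (hmul : ∀ (g h : G) (μ), VorE Λ μ → a (g * h) μ = a g (a h μ))
    (hd : ∀ g μ, VorE Λ μ → Λ.d (a g μ) = Λ.d μ)
    (hs : ∀ g μ, IsEdge Λ μ → a g (Λ.ofObj (Λ.s μ)) = Λ.ofObj (Λ.s (a g μ)))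
    (hr : ∀ g μ, IsEdge Λ μ → a g (Λ.ofObj (Λ.r μ)) = Λ.ofObj (Λ.r (a g μ)))
    (hiii : ∀ g μ ν, IsEdge Λ μ → Λ.s μ = Λ.r ν →
      a (ρ g μ) (Λ.ofObj (Λ.s ν)) = a g (Λ.ofObj (Λ.s ν)))
    (hiv : ∀ (g : G) (μ ν α β : Λ.Mor) (h₁ : Λ.s μ = Λ.r ν) (h₂ : Λ.s α = Λ.r β),
      IsEdge Λ μ → IsEdge Λ ν → IsEdge Λ α → IsEdge Λ β →
      Λ.comp μ ν h₁ = Λ.comp α β h₂ →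
      ∀ (p₁ : Λ.s (a g μ) = Λ.r (a (ρ g μ) ν)) (p₂ : Λ.s (a g α) = Λ.r (a (ρ g α) β)),
        Λ.comp (a g μ) (a (ρ g μ) ν) p₁ = Λ.comp (a g α) (a (ρ g α) β) p₂)
    (hv : ∀ g v, ρ g (Λ.ofObj v) = g)
    (hvi : ∀ (g : G) (μ ν α β : Λ.Mor) (h₁ : Λ.s μ = Λ.r ν) (h₂ : Λ.s α = Λ.r β),
      IsEdge Λ μ → IsEdge Λ ν → IsEdge Λ α → IsEdge Λ β →
      Λ.comp μ ν h₁ = Λ.comp α β h₂ → ρ (ρ g μ) ν = ρ (ρ g α) β)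
    (hvii : ∀ (g h : G) (μ), VorE Λ μ → ρ (g * h) μ = ρ g (a h μ) * ρ h μ) :
    ∃! S : SelfSimilar k G Λ, ∀ g μ, VorE Λ μ → S.act g μ = a g μ ∧ S.res g μ = ρ g μ := by
  let A : EdgeSelfSimilar G Λ := ⟨a, ρ, hone, hmul, hd, hs, hr, hiii, hiv, hv, hvi, hvii⟩
  exact ⟨A.toSelfSimilar, fun g _ hμ => A.extAct_extRes_of_vorE g hμ, A.eq_toSelfSimilar⟩

/-- a compatible action and restriction on `Λ⁰ ∪ Λᵉ` extends uniquely to a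
self-similar action of `G` on `Λ`. -/
theorem stmt2 {k : ℕ} (hk : 0 < k) (G : Type) [Group G] [Countable G] (Λ : KGraph k)
    (a : G → Λ.Mor → Λ.Mor) (ρ : G → Λ.Mor → G)
    (hone : ∀ μ, VorE Λ μ → a 1 μ = μ)
    (hmul : ∀ (g h : G) (μ), VorE Λ μ → a (g * h) μ = a g (a h μ))
    (hd : ∀ g μ, VorE Λ μ → Λ.d (a g μ) = Λ.d μ)
    (hs : ∀ g μ, IsEdge Λ μ → a g (Λ.ofObj (Λ.s μ)) = Λ.ofObj (Λ.s (a g μ)))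
    (hr : ∀ g μ, IsEdge Λ μ → a g (Λ.ofObj (Λ.r μ)) = Λ.ofObj (Λ.r (a g μ)))
    (hiii : ∀ g μ ν, IsEdge Λ μ → Λ.s μ = Λ.r ν →
      a (ρ g μ) (Λ.ofObj (Λ.s ν)) = a g (Λ.ofObj (Λ.s ν)))
    (hiv : ∀ (g : G) (μ ν α β : Λ.Mor) (h₁ : Λ.s μ = Λ.r ν) (h₂ : Λ.s α = Λ.r β),
      IsEdge Λ μ → IsEdge Λ ν → IsEdge Λ α → IsEdge Λ β →
      Λ.comp μ ν h₁ = Λ.comp α β h₂ →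
      ∀ (p₁ : Λ.s (a g μ) = Λ.r (a (ρ g μ) ν)) (p₂ : Λ.s (a g α) = Λ.r (a (ρ g α) β)),
        Λ.comp (a g μ) (a (ρ g μ) ν) p₁ = Λ.comp (a g α) (a (ρ g α) β) p₂)
    (hv : ∀ g v, ρ g (Λ.ofObj v) = g)
    (hvi : ∀ (g : G) (μ ν α β : Λ.Mor) (h₁ : Λ.s μ = Λ.r ν) (h₂ : Λ.s α = Λ.r β),
      IsEdge Λ μ → IsEdge Λ ν → IsEdge Λ α → IsEdge Λ β →
      Λ.comp μ ν h₁ = Λ.comp α β h₂ → ρ (ρ g μ) ν = ρ (ρ g α) β)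
    (hvii : ∀ (g h : G) (μ), VorE Λ μ → ρ (g * h) μ = ρ g (a h μ) * ρ h μ) :
    ∃! S : SelfSimilar k G Λ, ∀ g μ, VorE Λ μ → S.act g μ = a g μ ∧ S.res g μ = ρ g μ :=
  stmt2_general G Λ a ρ hone hmul hd hs hr hiii hiv hv hvi hvii

end SSKG
end

section
/- Let Λ be a k-graph with a self-similar action of a group G. For every g ∈ G and x ∈ Λ^∞, the assignment (p,q) ↦ g|_{x(0,p)}·x(p,q) defines an infinite path g·x ∈ Λ^∞ (i.e., it is a degree-preserving functor Ω_k → Λ), and the map G × Λ^∞ → Λ^∞, (g, x) ↦ g·x, is a group action of G on Λ^∞: 1_G·x = x and g₁·(g₂·x) = (g₁g₂)·x for all g₁, g₂ ∈ G and x ∈ Λ^∞. -/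
namespace SSKG

variable {k : ℕ} {G : Type} [Group G] {Λ : KGraph k}

@[simp]
lemma SelfSimilar.actInf_seg (S : SelfSimilar k G Λ) (g : G) (x : InfPath Λ) (p q : NK k)
    (h : p ≤ q) :
    (S.actInf g x).seg p q h = S.act (S.res g (x.seg 0 p (le0 p))) (x.seg p q h) :=
  rfl

lemma InfPath.ext_seg {x y : InfPath Λ}
    (h : ∀ p q (hpq : p ≤ q), x.seg p q hpq = y.seg p q hpq) : x = y :=
  InfPath.ext' (funext fun p => funext fun q => funext (h p q))

lemma InfPath.exists_seg_zero_zero_eq_ofObj (x : InfPath Λ) :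
    ∃ v, x.seg 0 0 le_rfl = Λ.ofObj v :=
  Λ.eq_ofObj_of_d_eq_zero _ (by rw [x.d_seg]; funext i; simp)

lemma SelfSimilar.res_seg_zero_zero (S : SelfSimilar k G Λ) (g : G) (x : InfPath Λ) :
    S.res g (x.seg 0 0 le_rfl) = g := by
  obtain ⟨v, hv⟩ := x.exists_seg_zero_zero_eq_ofObj
  rw [hv, S.res_ofObj]

lemma SelfSimilar.one_actInf (S : SelfSimilar k G Λ) (x : InfPath Λ) : S.actInf 1 x = x :=
  InfPath.ext_seg fun p q h => by rw [actInf_seg, S.res_one, S.act_one]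

/- Since `x(0,0)` is a vertex, `(g₂·x)(0,p) = g₂·x(0,p)`; the cocycle identity
`(g₁g₂)|_μ = g₁|_{g₂·μ} g₂|_μ` then matches the two sides segment by segment. -/
lemma SelfSimilar.actInf_actInf (S : SelfSimilar k G Λ) (g₁ g₂ : G) (x : InfPath Λ) :
    S.actInf g₁ (S.actInf g₂ x) = S.actInf (g₁ * g₂) x :=
  InfPath.ext_seg fun p q h => by
    rw [actInf_seg, actInf_seg, actInf_seg, actInf_seg, S.res_seg_zero_zero, ← S.act_mul,
      ← S.res_mul]

theorem stmt3_general {k : ℕ} (G : Type) [Group G]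
    (Λ : KGraph k) (S : SelfSimilar k G Λ) :
    ∃ A : G → InfPath Λ → InfPath Λ,
      (∀ (g : G) (x : InfPath Λ) (p q : NK k) (h : p ≤ q),
        (A g x).seg p q h = S.act (S.res g (x.seg 0 p (le0 p))) (x.seg p q h)) ∧
      (∀ (g : G) (x y : InfPath Λ),
        (∀ (p q : NK k) (h : p ≤ q),
          y.seg p q h = S.act (S.res g (x.seg 0 p (le0 p))) (x.seg p q h)) → y = A g x) ∧
      (∀ x : InfPath Λ, A 1 x = x) ∧
      (∀ (g₁ g₂ : G) (x : InfPath Λ), A g₁ (A g₂ x) = A (g₁ * g₂) x) :=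
  ⟨S.actInf, S.actInf_seg, fun _ _ _ hy => InfPath.ext_seg hy, S.one_actInf, S.actInf_actInf⟩

/-- `(p,q) ↦ g|_{x(0,p)}·x(p,q)` defines an infinite path `g·x`, and
`(g, x) ↦ g·x` is a group action of `G` on `Λ^∞`. -/
theorem stmt3 {k : ℕ} (hk : 0 < k) (G : Type) [Group G] [Countable G]
    (Λ : KGraph k) (S : SelfSimilar k G Λ) :
    ∃ A : G → InfPath Λ → InfPath Λ,
      (∀ (g : G) (x : InfPath Λ) (p q : NK k) (h : p ≤ q),
        (A g x).seg p q h = S.act (S.res g (x.seg 0 p (le0 p))) (x.seg p q h)) ∧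
      (∀ (g : G) (x y : InfPath Λ),
        (∀ (p q : NK k) (h : p ≤ q),
          y.seg p q h = S.act (S.res g (x.seg 0 p (le0 p))) (x.seg p q h)) → y = A g x) ∧
      (∀ x : InfPath Λ, A 1 x = x) ∧
      (∀ (g₁ g₂ : G) (x : InfPath Λ), A g₁ (A g₂ x) = A (g₁ * g₂) x) :=
  stmt3_general G Λ S

end SSKG
end

section
/- Let Λ be a k-graph with a self-similar action of a group G. Set Λ^e := ⋃_{i=1}^{k} Λ^{e_i}. Suppose that for every g ∈ G and every edge μ ∈ Λ^e, the conditions g·μ = μ and g|_μ = 1_G imply g = 1_G. Then the action is pseudo free, i.e., for every g ∈ G and every μ ∈ Λ, g·μ = μ and g|_μ = 1_G imply g = 1_G. -/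
/-! Write `μ = eβ` with `e` an edge. By unique factorization, `g·μ = μ` splits into `g·e = e`
and `g|_e·β = β`, while `(g|_e)|_β = g|_μ = 1`. Induction on the length of `μ` gives
`g|_e = 1`, and the hypothesis on edges then gives `g = 1`. -/

namespace SSKG

variable {k : ℕ} {G : Type} [Group G] {Λ : KGraph k}

theorem KGraph.exists_edge_comp_of_d_ne_zero (Λ : KGraph k) {μ : Λ.Mor} (hμ : Λ.d μ ≠ 0) :
    ∃ (α β : Λ.Mor) (hαβ : Λ.s α = Λ.r β), IsEdge Λ α ∧
      ∑ i, Λ.d β i < ∑ i, Λ.d μ i ∧ Λ.comp α β hαβ = μ := by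
  obtain ⟨i, hi⟩ : ∃ i, Λ.d μ i ≠ 0 := Function.ne_iff.mp hμ
  have hle : Pi.single i 1 ≤ Λ.d μ := fun j => by
    rcases eq_or_ne j i with rfl | _ <;> simp [*, Nat.one_le_iff_ne_zero]
  obtain ⟨α, β, hαβ, hα, -, rfl⟩ :=
    Λ.factor_exists μ (Pi.single i 1) _ (add_tsub_cancel_of_le hle).symm
  refine ⟨α, β, hαβ, ⟨i, hα⟩, ?_, rfl⟩
  simp [Λ.d_comp, hα, Finset.sum_add_distrib]

theorem SelfSimilar.act_eq_of_act_comp_eq (S : SelfSimilar k G Λ) {g : G} {α β : Λ.Mor}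
    {hαβ : Λ.s α = Λ.r β} (hfix : S.act g (Λ.comp α β hαβ) = Λ.comp α β hαβ) :
    S.act g α = α ∧ S.act (S.res g α) β = β := by
  rw [S.act_comp] at hfix
  exact Λ.factor_unique _ _ _ _ _ _ (S.act_d g α) hfix

theorem SelfSimilar.eq_one_of_act_eq_of_res_eq_one (S : SelfSimilar k G Λ)
    (hedge : ∀ (g : G) (μ : Λ.Mor), IsEdge Λ μ → S.act g μ = μ → S.res g μ = 1 → g = 1)
    (g : G) (μ : Λ.Mor) (hact : S.act g μ = μ) (hres : S.res g μ = 1) : g = 1 := by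
  by_cases hμ : Λ.d μ = 0
  · obtain ⟨v, rfl⟩ := Λ.eq_ofObj_of_d_eq_zero μ hμ
    rwa [S.res_ofObj] at hres
  obtain ⟨α, β, hαβ, hα, hlt, rfl⟩ := Λ.exists_edge_comp_of_d_ne_zero hμ
  obtain ⟨hfixα, hfixβ⟩ := S.act_eq_of_act_comp_eq hact
  have hresα : S.res g α = 1 :=
    S.eq_one_of_act_eq_of_res_eq_one hedge _ β hfixβ (by rwa [← S.res_comp])
  exact hedge g α hα hfixα hresα
termination_by ∑ i, Λ.d μ i

theorem stmt8_general {k : ℕ} (G : Type) [Group G]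
    (Λ : KGraph k) (S : SelfSimilar k G Λ)
    (h : ∀ (g : G) (μ : Λ.Mor), IsEdge Λ μ → S.act g μ = μ → S.res g μ = 1 → g = 1) :
    S.PseudoFree :=
  S.eq_one_of_act_eq_of_res_eq_one h

/-- if `g·μ = μ` and `g|_μ = 1` force `g = 1` for every edge `μ`, then the
self-similar action is pseudo free. -/
theorem stmt8 {k : ℕ} (hk : 0 < k) (G : Type) [Group G] [Countable G]
    (Λ : KGraph k) (S : SelfSimilar k G Λ)
    (h : ∀ (g : G) (μ : Λ.Mor), IsEdge Λ μ → S.act g μ = μ → S.res g μ = 1 → g = 1) :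
    S.PseudoFree :=
  stmt8_general G Λ S h

end SSKG
end

section
/- Let Λ be a k-graph with a pseudo free self-similar action of a group G. Then for all g, g̃ ∈ G and x ∈ Λ^∞: if g·x = g̃·x and there exists z ∈ ℕ^k with g|_{x(0,p)} = g̃|_{x(0,p)} for all p ≥ z (i.e., [g|_x] = [g̃|_x] in Q(ℕ^k,G)), then g = g̃. -/
namespace SSKG

variable {k : ℕ} {G : Type} [Group G] {Λ : KGraph k}

namespace SelfSimilar

variable (S : SelfSimilar k G Λ)

theorem res_of_d_eq_zero (g : G) {μ : Λ.Mor} (hμ : Λ.d μ = 0) : S.res g μ = g := by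
  obtain ⟨v, rfl⟩ := Λ.eq_ofObj_of_d_eq_zero μ hμ
  exact S.res_ofObj g v

theorem res_inv_act (g : G) (μ : Λ.Mor) : S.res g⁻¹ (S.act g μ) = (S.res g μ)⁻¹ := by
  rw [eq_inv_iff_mul_eq_one, ← S.res_mul, inv_mul_cancel, S.res_one]

theorem actInf_seg_zero (g : G) (x : InfPath Λ) (q : NK k) :
    (S.actInf g x).seg 0 q (le0 q) = S.act g (x.seg 0 q (le0 q)) := by
  have hvertex : Λ.d (x.seg 0 0 (le0 0)) = 0 := by
    rw [x.d_seg]; funext i; simp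
  simp only [actInf, S.res_of_d_eq_zero g hvertex]

variable {S}

theorem PseudoFree.eq_of_act_eq_of_res_eq (hpf : S.PseudoFree) {g g' : G} {μ : Λ.Mor}
    (hact : S.act g μ = S.act g' μ) (hres : S.res g μ = S.res g' μ) : g = g' := by
  have hfix : S.act (g'⁻¹ * g) μ = μ := by
    rw [S.act_mul, hact, ← S.act_mul, inv_mul_cancel, S.act_one]
  have hres_one : S.res (g'⁻¹ * g) μ = 1 := by
    rw [S.res_mul, hact, res_inv_act, hres, inv_mul_cancel]
  exact (inv_mul_eq_one.mp (hpf _ μ hfix hres_one)).symm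

end SelfSimilar

theorem stmt10_general {k : ℕ} (G : Type) [Group G]
    (Λ : KGraph k) (S : SelfSimilar k G Λ) (hpf : S.PseudoFree) :
    ∀ (g g' : G) (x : InfPath Λ), S.actInf g x = S.actInf g' x →
      (∃ z : NK k, ∀ p, z ≤ p → S.resInf g x p = S.resInf g' x p) → g = g' := by
  rintro g g' x hact ⟨z, hres⟩
  refine hpf.eq_of_act_eq_of_res_eq (μ := x.seg 0 z (le0 z)) ?_ (hres z le_rfl)
  rw [← S.actInf_seg_zero, ← S.actInf_seg_zero, hact]

/-- for a pseudo free action, `g·x = g̃·x` and `[g|_x] = [g̃|_x]` imply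
`g = g̃`. -/
theorem stmt10 {k : ℕ} (hk : 0 < k) (G : Type) [Group G] [Countable G]
    (Λ : KGraph k) (S : SelfSimilar k G Λ) (hpf : S.PseudoFree) :
    ∀ (g g' : G) (x : InfPath Λ), S.actInf g x = S.actInf g' x →
      (∃ z : NK k, ∀ p, z ≤ p → S.resInf g x p = S.resInf g' x p) → g = g' :=
  stmt10_general G Λ S hpf

end SSKG
end

section
/- Let Λ be a k-graph with a self-similar action of a group G. Then Λ is G-cofinal if and only if for all v, w ∈ Λ^0 there exists p ∈ ℕ^k such that for every μ ∈ wΛ^p there exist g ∈ G and λ ∈ Λ with r(λ) = g·v and s(λ) = s(μ) (i.e., (G·v)Λs(μ) ≠ ∅ for all μ ∈ wΛ^p). -/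
/-!
If `G`-cofinality failed for `v, w`, then in every degree `q` some path out of `w` would have a
source not reached from the orbit `G·v`. Such paths are closed under taking initial segments
and finite in each degree by row-finiteness, so König's lemma yields a coherent family of them,
i.e. the initial segments `x(0,q)` of one infinite path `x`. Cofinality reaches some `x(p,p)`
from `G·v`, a contradiction. Conversely, apply the condition to `w = x(0,0)` and `μ = x(0,p)`.
-/

namespace SSKG

variable {k : ℕ} {G : Type} [Group G] {Λ : KGraph k}

namespace KGraph

lemma comp_congr_left {μ μ' ν : Λ.Mor} (hμ : μ = μ') (h : Λ.s μ = Λ.r ν)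
    (h' : Λ.s μ' = Λ.r ν) : Λ.comp μ ν h = Λ.comp μ' ν h' := by
  cases hμ; rfl

lemma comp_left_cancel {α β β' : Λ.Mor} (h : Λ.s α = Λ.r β) (h' : Λ.s α = Λ.r β')
    (he : Λ.comp α β h = Λ.comp α β' h') : β = β' :=
  (Λ.factor_unique α β α β' h h' rfl he).2

variable (Λ) in
def IsPrefix (α μ : Λ.Mor) : Prop :=
  ∃ (γ : Λ.Mor) (h : Λ.s α = Λ.r γ), Λ.comp α γ h = μ

lemma IsPrefix.refl (μ : Λ.Mor) : Λ.IsPrefix μ μ :=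
  ⟨Λ.ofObj (Λ.s μ), (Λ.r_ofObj _).symm, Λ.comp_ofObj μ _⟩

lemma IsPrefix.trans {α β μ : Λ.Mor} (hαβ : Λ.IsPrefix α β) (hβμ : Λ.IsPrefix β μ) :
    Λ.IsPrefix α μ := by
  obtain ⟨γ, h, rfl⟩ := hαβ
  obtain ⟨δ, h', rfl⟩ := hβμ
  have hγδ : Λ.s γ = Λ.r δ := (Λ.s_comp α γ h).symm.trans h'
  exact ⟨Λ.comp γ δ hγδ, h.trans (Λ.r_comp γ δ hγδ).symm, (Λ.comp_assoc α γ δ h hγδ).symm⟩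

lemma IsPrefix.r_eq {α μ : Λ.Mor} (h : Λ.IsPrefix α μ) : Λ.r α = Λ.r μ := by
  obtain ⟨γ, h, rfl⟩ := h
  exact (Λ.r_comp α γ h).symm

lemma IsPrefix.eq_of_d_eq {α β μ : Λ.Mor} (hα : Λ.IsPrefix α μ) (hβ : Λ.IsPrefix β μ)
    (hd : Λ.d α = Λ.d β) : α = β := by
  obtain ⟨γ, h, hγ⟩ := hα
  obtain ⟨δ, h', hδ⟩ := hβ
  exact (Λ.factor_unique α γ β δ h h' hd (hγ.trans hδ.symm)).1

lemma exists_isPrefix {μ : Λ.Mor} {p : NK k} (hp : p ≤ Λ.d μ) :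
    ∃ α, Λ.d α = p ∧ Λ.IsPrefix α μ := by
  obtain ⟨α, γ, h, hdα, -, hc⟩ :=
    Λ.factor_exists μ p (Λ.d μ - p) (add_tsub_cancel_of_le hp).symm
  exact ⟨α, hdα, γ, h, hc⟩

noncomputable def initSeg (μ : Λ.Mor) (p : NK k) (hp : p ≤ Λ.d μ) : Λ.Mor :=
  (exists_isPrefix hp).choose

lemma d_initSeg (μ : Λ.Mor) (p : NK k) (hp : p ≤ Λ.d μ) : Λ.d (Λ.initSeg μ p hp) = p :=
  (exists_isPrefix hp).choose_spec.1

lemma initSeg_isPrefix (μ : Λ.Mor) (p : NK k) (hp : p ≤ Λ.d μ) :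
    Λ.IsPrefix (Λ.initSeg μ p hp) μ :=
  (exists_isPrefix hp).choose_spec.2

lemma IsPrefix.initSeg_eq {α μ : Λ.Mor} (h : Λ.IsPrefix α μ) {p : NK k} (hp : p ≤ Λ.d μ)
    (hdα : Λ.d α = p) : Λ.initSeg μ p hp = α :=
  (initSeg_isPrefix μ p hp).eq_of_d_eq h ((d_initSeg μ p hp).trans hdα.symm)

end KGraph

namespace InfPath

lemma d_seg_zero (x : InfPath Λ) (p : NK k) : Λ.d (x.seg 0 p (le0 p)) = p := by
  rw [x.d_seg]; funext i; simp

lemma r_seg_zero (x : InfPath Λ) (p : NK k) :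
    Λ.r (x.seg 0 p (le0 p)) = Λ.r (x.seg 0 0 le_rfl) := by
  rw [← x.comp_seg 0 0 p le_rfl (le0 p), Λ.r_comp]

lemma seg_self (x : InfPath Λ) (p : NK k) :
    x.seg p p le_rfl = Λ.ofObj (Λ.s (x.seg 0 p (le0 p))) := by
  obtain ⟨u, hu⟩ := Λ.eq_ofObj_of_d_eq_zero (x.seg p p le_rfl) (by rw [x.d_seg]; funext i; simp)
  rw [x.src_seg 0 p p (le0 p) le_rfl, hu, Λ.r_ofObj]

noncomputable def ofPrefixes (P : NK k → Λ.Mor) (hd : ∀ q, Λ.d (P q) = q)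
    (hP : ∀ p q, p ≤ q → Λ.IsPrefix (P p) (P q)) : InfPath Λ where
  seg p q h := (hP p q h).choose
  d_seg p q h := by
    obtain ⟨_, hc⟩ := (hP p q h).choose_spec
    have hsum := congrArg Λ.d hc
    rw [Λ.d_comp, hd, hd] at hsum
    funext i
    have := congrFun hsum i
    simp only [Pi.add_apply] at this
    omega
  src_seg p q m h₁ h₂ := by
    obtain ⟨hpq, hcpq⟩ := (hP p q h₁).choose_spec
    obtain ⟨hqm, -⟩ := (hP q m h₂).choose_spec
    exact ((Λ.s_comp _ _ hpq).symm.trans (congrArg Λ.s hcpq)).trans hqm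
  comp_seg p q m h₁ h₂ := by
    obtain ⟨hpq, hcpq⟩ := (hP p q h₁).choose_spec
    obtain ⟨hqm, hcqm⟩ := (hP q m h₂).choose_spec
    obtain ⟨hpm, hcpm⟩ := (hP p m (h₁.trans h₂)).choose_spec
    refine Λ.comp_left_cancel (hpq.trans (Λ.r_comp _ _ _).symm) hpm ?_
    rw [← Λ.comp_assoc (h₁ := hpq), Λ.comp_congr_left hcpq _ hqm, hcqm, hcpm]

lemma s_ofPrefixes_seg (P : NK k → Λ.Mor) (hd : ∀ q, Λ.d (P q) = q)
    (hP : ∀ p q, p ≤ q → Λ.IsPrefix (P p) (P q)) (p q : NK k) (h : p ≤ q) :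
    Λ.s ((ofPrefixes P hd hP).seg p q h) = Λ.s (P q) := by
  obtain ⟨hpq, hcpq⟩ := (hP p q h).choose_spec
  exact (Λ.s_comp _ _ hpq).symm.trans (congrArg Λ.s hcpq)

end InfPath

namespace SelfSimilar

open KGraph CategoryTheory Opposite

-- `NK k` is a Pi type, which would otherwise carry the product category structure.
attribute [local instance 2000] Preorder.smallCategory

variable (S : SelfSimilar k G Λ)

/-- `(G·v)Λu ≠ ∅`. -/
def Reaches (v u : Λ.Obj) : Prop :=
  ∃ (g : G) (lam : Λ.Mor), Λ.r lam = S.actV g v ∧ Λ.s lam = u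

lemma Reaches.of_isPrefix {S : SelfSimilar k G Λ} {v : Λ.Obj} {α μ : Λ.Mor}
    (hαμ : Λ.IsPrefix α μ) (h : S.Reaches v (Λ.s α)) : S.Reaches v (Λ.s μ) := by
  obtain ⟨γ, hγ, rfl⟩ := hαμ
  obtain ⟨g, lam, hr, hs⟩ := h
  exact ⟨g, Λ.comp lam γ (hs.trans hγ), (Λ.r_comp _ _ _).trans hr,
    (Λ.s_comp _ _ _).trans (Λ.s_comp _ _ _).symm⟩

def unreachablePaths (v w : Λ.Obj) (q : NK k) : Set Λ.Mor :=
  {μ | Λ.r μ = w ∧ Λ.d μ = q ∧ ¬ S.Reaches v (Λ.s μ)}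

lemma unreachablePaths_finite (v w : Λ.Obj) (q : NK k) : (S.unreachablePaths v w q).Finite :=
  (Λ.row_finite w q).subset fun _ hμ => ⟨hμ.1, hμ.2.1⟩

lemma initSeg_mem_unreachablePaths {v w : Λ.Obj} {p q : NK k} {μ : Λ.Mor}
    (hμ : μ ∈ S.unreachablePaths v w q) (hpq : p ≤ q) :
    Λ.initSeg μ p (hpq.trans_eq hμ.2.1.symm) ∈ S.unreachablePaths v w p :=
  ⟨(initSeg_isPrefix μ p _).r_eq.trans hμ.1, d_initSeg μ p _,
    fun h => hμ.2.2 (h.of_isPrefix (initSeg_isPrefix μ p _))⟩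

noncomputable def unreachableSystem (v w : Λ.Obj) : (NK k)ᵒᵖ ⥤ Type where
  obj q := S.unreachablePaths v w q.unop
  map {q p} f := TypeCat.ofHom fun μ =>
    ⟨Λ.initSeg μ.1 p.unop ((leOfHom f.unop).trans_eq μ.2.2.1.symm),
      S.initSeg_mem_unreachablePaths μ.2 (leOfHom f.unop)⟩
  map_id q := by
    ext μ
    show Λ.initSeg μ.1 q.unop μ.2.2.1.symm.le = μ.1
    exact (IsPrefix.refl μ.1).initSeg_eq _ μ.2.2.1
  map_comp {q p l} f g := by
    ext μ
    have hqp := (leOfHom f.unop).trans_eq μ.2.2.1.symm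
    show Λ.initSeg μ.1 l.unop ((leOfHom g.unop).trans hqp)
      = Λ.initSeg (Λ.initSeg μ.1 p.unop hqp) l.unop
        ((leOfHom g.unop).trans_eq (d_initSeg μ.1 p.unop hqp).symm)
    exact ((initSeg_isPrefix _ _ _).trans (initSeg_isPrefix _ _ _)).initSeg_eq _
      (d_initSeg _ _ _)

lemma exists_coherent_unreachablePaths {v w : Λ.Obj}
    (hne : ∀ q, (S.unreachablePaths v w q).Nonempty) :
    ∃ P : NK k → Λ.Mor, (∀ q, P q ∈ S.unreachablePaths v w q) ∧
      ∀ p q, p ≤ q → Λ.IsPrefix (P p) (P q) := by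
  have : ∀ q, Finite ((S.unreachableSystem v w).obj q) :=
    fun q => (S.unreachablePaths_finite v w q.unop).to_subtype
  have : ∀ q, Nonempty ((S.unreachableSystem v w).obj q) :=
    fun q => (hne q.unop).to_subtype
  obtain ⟨u, hu⟩ := nonempty_sections_of_finite_inverse_system (S.unreachableSystem v w)
  refine ⟨fun q => (u (op q)).1, fun q => (u (op q)).2, fun p q hpq => ?_⟩
  dsimp only
  have hpre : Λ.initSeg (u (op q)).1 p (hpq.trans_eq (u (op q)).2.2.1.symm) = (u (op p)).1 :=
    congrArg Subtype.val (hu (homOfLE hpq).op)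
  exact hpre ▸ initSeg_isPrefix _ _ _

end SelfSimilar

lemma GCofinal.exists_forall_reaches {S : SelfSimilar k G Λ} (hS : GCofinal S)
    (v w : Λ.Obj) :
    ∃ p : NK k, ∀ μ : Λ.Mor, Λ.r μ = w → Λ.d μ = p → S.Reaches v (Λ.s μ) := by
  by_contra! hbad
  obtain ⟨P, hPmem, hP⟩ := S.exists_coherent_unreachablePaths hbad
  have hd : ∀ q, Λ.d (P q) = q := fun q => (hPmem q).2.1
  -- cofinality applied to the path with initial segments `P q` reaches the source of one of them
  obtain ⟨p, μ, g, hμ, hr⟩ := hS (InfPath.ofPrefixes P hd hP) v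
  refine (hPmem p).2.2 ⟨g, μ, hr, ?_⟩
  rw [← InfPath.s_ofPrefixes_seg P hd hP p p le_rfl, ← hμ, Λ.s_ofObj]

lemma gCofinal_of_forall_exists_reaches {S : SelfSimilar k G Λ}
    (h : ∀ v w : Λ.Obj, ∃ p : NK k, ∀ μ : Λ.Mor, Λ.r μ = w → Λ.d μ = p →
      S.Reaches v (Λ.s μ)) : GCofinal S := by
  intro x v
  obtain ⟨p, hp⟩ := h v (Λ.r (x.seg 0 0 le_rfl))
  obtain ⟨g, lam, hr, hs⟩ := hp _ (x.r_seg_zero p) (x.d_seg_zero p)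
  exact ⟨p, lam, g, by rw [hs, x.seg_self], hr⟩

theorem stmt11_general {k : ℕ} (G : Type) [Group G]
    (Λ : KGraph k) (S : SelfSimilar k G Λ) :
    GCofinal S ↔ ∀ v w : Λ.Obj, ∃ p : NK k, ∀ μ : Λ.Mor, Λ.r μ = w → Λ.d μ = p →
      ∃ (g : G) (lam : Λ.Mor), Λ.r lam = S.actV g v ∧ Λ.s lam = Λ.s μ :=
  ⟨fun hS => hS.exists_forall_reaches, gCofinal_of_forall_exists_reaches⟩

/-- `Λ` is `G`-cofinal iff for all vertices `v, w` there is `p ∈ ℕ^k` such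
that `(G·v)Λs(μ) ≠ ∅` for every `μ ∈ wΛ^p`. -/
theorem stmt11 {k : ℕ} (hk : 0 < k) (G : Type) [Group G] [Countable G]
    (Λ : KGraph k) (S : SelfSimilar k G Λ) :
    GCofinal S ↔ ∀ v w : Λ.Obj, ∃ p : NK k, ∀ μ : Λ.Mor, Λ.r μ = w → Λ.d μ = p →
      ∃ (g : G) (lam : Λ.Mor), Λ.r lam = S.actV g v ∧ Λ.s lam = Λ.s μ :=
  stmt11_general G Λ S

end SSKG
end
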